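/- Let a, b, 0, 1 be glues with a ≠ b and 0 ≠ 1, and consider the three tile types A = (a, 0, a, 0), B = (a, 0, b, 1), C = (b, 1, a, 0) (glues listed in order N, W, S, E). In any column assembly f : Fin n → {A, B, C} (satisfying f(y+1).S = f(y).N), the sequence of east glues never contains two consecutive 1's: if f(y).E = 1 and y+1 < n, then f(y+1).E = 0. -/

import Mathlib

structure Tile (G : Type*) where
  N : G
  W : G
  S : G
  E : G

namespace Tile

variable {G : Type*} {a b z o : G}

def cyan (a b z o : G) : Set (Tile G) :=
  {⟨a, z, a, z⟩, ⟨a, z, b, o⟩, ⟨b, o, a, z⟩}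

theorem north_eq_of_mem_cyan_of_east_eq (hzo : z ≠ o) {t : Tile G} (ht : t ∈ cyan a b z o)
    (hE : t.E = o) : t.N = a := by
  rcases ht with rfl | rfl | rfl
  · exact absurd hE hzo
  · rfl
  · exact absurd hE hzo

theorem east_eq_of_mem_cyan_of_south_eq (hab : a ≠ b) {t : Tile G} (ht : t ∈ cyan a b z o)
    (hS : t.S = a) : t.E = z := by
  rcases ht with rfl | rfl | rfl
  · rfl
  · exact absurd hS.symm hab
  · rfl

end Tile

/-- For A = (a,0,a,0), B = (a,0,b,1), C = (b,1,a,0), the sequence of east glues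
of a column assembly never contains two consecutive 1's. -/
theorem no_two_consecutive_east_ones {G : Type*} (a b z o : G)
    (hab : a ≠ b) (hzo : z ≠ o) (A B C : Tile G)
    (hA : A = ⟨a, z, a, z⟩) (hB : B = ⟨a, z, b, o⟩) (hC : C = ⟨b, o, a, z⟩)
    (n : ℕ) (f : Fin n → Tile G)
    (hmem : ∀ y, f y = A ∨ f y = B ∨ f y = C)
    (hcol : ∀ (y : ℕ) (hy : y + 1 < n),
      (f ⟨y + 1, hy⟩).S = (f ⟨y, Nat.lt_of_succ_lt hy⟩).N) :
    ∀ (y : ℕ) (hy : y + 1 < n),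
      (f ⟨y, Nat.lt_of_succ_lt hy⟩).E = o → (f ⟨y + 1, hy⟩).E = z := by
  subst hA hB hC
  intro y hy hE
  have hN := Tile.north_eq_of_mem_cyan_of_east_eq hzo (hmem _) hE
  exact Tile.east_eq_of_mem_cyan_of_south_eq hab (hmem _) (hN ▸ hcol y hy)
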